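/- arXiv:2207.02280 — 7 statements merged into one kernel-verified Lean document; each statement's English description precedes it below -/
import Mathlib

section
/- Let p be an odd prime and a ∈ F_p nonzero. The proportion of matrices in GL_2(F_p) with trace equal to a equals (p^2 - p - 1)/((p-1)^2(p+1)). That is, #{γ ∈ GL_2(F_p) : trace(γ) = a} / #GL_2(F_p) = (p^2-p-1)/((p-1)^2(p+1)). -/
open Matrix Finset

section aux
variable {K : Type*} [Field K] [Fintype K] [DecidableEq K]

lemma card_pairs_mul_ne (d : K) :
    Nat.card {bc : K × K // bc.1 * bc.2 ≠ d} =
      if d = 0 then (Fintype.card K - 1)^2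
      else Fintype.card K ^ 2 - (Fintype.card K - 1) := by
  rw [Nat.card_eq_fintype_card, Fintype.card_subtype]
  split_ifs with hd
  · subst hd
    have : (univ.filter fun bc : K × K => bc.1 * bc.2 ≠ 0) =
        (univ.filter fun b : K => b ≠ 0) ×ˢ (univ.filter fun b : K => b ≠ 0) := by
      ext bc
      simp [mul_ne_zero_iff]
    rw [this, Finset.card_product, Finset.filter_ne', Finset.card_erase_of_mem (mem_univ _),
      Finset.card_univ, sq]
  · have hcard : (univ.filter fun bc : K × K => bc.1 * bc.2 = d).card
        = Fintype.card K - 1 := by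
      have : (univ.filter fun bc : K × K => bc.1 * bc.2 = d).card
          = ((univ : Finset K).erase 0).card := by
        apply Finset.card_bij' (fun bc _ => bc.1) (fun b _ => (b, b⁻¹ * d))
        · intro bc hbc
          simp only [mem_filter, mem_univ, true_and] at hbc
          simp only [mem_erase, mem_univ, and_true]
          intro h0
          exact hd (by rw [← hbc, h0, zero_mul])
        · intro b hb
          simp only [mem_erase, mem_univ, and_true] at hb
          simp only [mem_filter, mem_univ, true_and]
          field_simp
        · intro bc hbc
          simp only [mem_filter, mem_univ, true_and] at hbc
          have h1 : bc.1 ≠ 0 := by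
            intro h0; exact hd (by rw [← hbc, h0, zero_mul])
          ext
          · rfl
          · simp only
            rw [← hbc]
            field_simp
        · intro b hb
          rfl
      rw [this, Finset.card_erase_of_mem (mem_univ _), Finset.card_univ]
    have huniv : (univ : Finset (K × K)).card = Fintype.card K ^ 2 := by
      rw [Finset.card_univ, Fintype.card_prod, sq]
    simp only [ne_eq]
    rw [Finset.filter_not, Finset.card_sdiff_of_subset (Finset.filter_subset _ _), hcard, huniv]

lemma card_triples (a : K) (ha : a ≠ 0) :
    Nat.card {t : K × K × K // t.2.1 * t.2.2 ≠ t.1 * (a - t.1)} =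
      2 * (Fintype.card K - 1)^2 +
        (Fintype.card K - 2) * (Fintype.card K ^ 2 - (Fintype.card K - 1)) := by
  have e : {t : K × K × K // t.2.1 * t.2.2 ≠ t.1 * (a - t.1)} ≃
      Σ x : K, {bc : K × K // bc.1 * bc.2 ≠ x * (a - x)} :=
    { toFun := fun t => ⟨t.1.1, ⟨t.1.2, t.2⟩⟩
      invFun := fun s => ⟨(s.1, s.2.1), s.2.2⟩
      left_inv := fun t => rfl
      right_inv := fun s => rfl }
  rw [Nat.card_congr e, Nat.card_eq_fintype_card, Fintype.card_sigma]
  have hterm : ∀ x : K, Fintype.card {bc : K × K // bc.1 * bc.2 ≠ x * (a - x)} =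
      if x * (a - x) = 0 then (Fintype.card K - 1)^2
      else Fintype.card K ^ 2 - (Fintype.card K - 1) := by
    intro x
    rw [← Nat.card_eq_fintype_card, card_pairs_mul_ne]
  rw [Finset.sum_congr rfl (fun x _ => hterm x), Finset.sum_ite, Finset.sum_const,
    Finset.sum_const, smul_eq_mul, smul_eq_mul]
  have hfil : (univ.filter fun x : K => x * (a - x) = 0) = {0, a} := by
    ext x
    simp only [mem_filter, mem_univ, true_and, mul_eq_zero, sub_eq_zero,
      mem_insert, mem_singleton]
    constructor
    · rintro (h | h)
      · exact Or.inl h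
      · exact Or.inr h.symm
    · rintro (h | h)
      · exact Or.inl h
      · exact Or.inr h.symm
  have hc2 : (univ.filter fun x : K => x * (a - x) = 0).card = 2 := by
    rw [hfil, Finset.card_insert_of_notMem (by simpa using (Ne.symm ha)),
      Finset.card_singleton]
  have hc3 : (univ.filter fun x : K => ¬ x * (a - x) = 0).card = Fintype.card K - 2 := by
    rw [Finset.filter_not, Finset.card_sdiff_of_subset (Finset.filter_subset _ _), hc2, Finset.card_univ]
  rw [hc2, hc3]

end aux

theorem prop_trace_nonzero (p : ℕ) [Fact p.Prime] (hp : Odd p) (a : ZMod p) (ha : a ≠ 0) :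
    (Nat.card {γ : GL (Fin 2) (ZMod p) |
        Matrix.trace (γ : Matrix (Fin 2) (Fin 2) (ZMod p)) = a} : ℚ) /
      (Nat.card (GL (Fin 2) (ZMod p)) : ℚ) =
      ((p : ℚ)^2 - p - 1) / (((p : ℚ) - 1)^2 * ((p : ℚ) + 1)) := by
  have hprime : p.Prime := Fact.out
  have hp3 : 3 ≤ p := by
    have h1 := hprime.two_le
    have h2 := Nat.odd_iff.mp hp
    omega
  -- step 1: equivalence with matrices
  have e1 : {γ : GL (Fin 2) (ZMod p) | Matrix.trace (γ : Matrix (Fin 2) (Fin 2) (ZMod p)) = a} ≃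
      {M : Matrix (Fin 2) (Fin 2) (ZMod p) // Matrix.trace M = a ∧ M.det ≠ 0} :=
    { toFun := fun γ => ⟨(γ.1 : Matrix (Fin 2) (Fin 2) (ZMod p)), γ.2,
        isUnit_iff_ne_zero.mp ((Matrix.isUnit_iff_isUnit_det _).mp γ.1.isUnit)⟩
      invFun := fun M => ⟨Matrix.GeneralLinearGroup.mkOfDetNeZero M.1 M.2.2, M.2.1⟩
      left_inv := fun γ => Subtype.ext (Units.ext rfl)
      right_inv := fun M => rfl }
  -- step 2: equivalence with triples
  have e2 : {M : Matrix (Fin 2) (Fin 2) (ZMod p) // Matrix.trace M = a ∧ M.det ≠ 0} ≃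
      {t : (ZMod p) × (ZMod p) × (ZMod p) // t.2.1 * t.2.2 ≠ t.1 * (a - t.1)} :=
    { toFun := fun M => ⟨(M.1 0 0, M.1 0 1, M.1 1 0), by
        obtain ⟨ht, hd⟩ := M.2
        rw [Matrix.trace_fin_two] at ht
        rw [Matrix.det_fin_two] at hd
        intro h
        apply hd
        simp only at h
        linear_combination M.1 0 0 * ht - h⟩
      invFun := fun t => ⟨!![t.1.1, t.1.2.1; t.1.2.2, a - t.1.1], by
        constructor
        · rw [Matrix.trace_fin_two]
          simp
        · rw [Matrix.det_fin_two]
          simp only [Matrix.cons_val', Matrix.cons_val_zero, Matrix.empty_val',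
            Matrix.cons_val_fin_one, Matrix.cons_val_one, Matrix.head_cons,
            Matrix.head_fin_const, Matrix.of_apply, Matrix.head_val']
          exact sub_ne_zero.mpr (Ne.symm t.2)⟩
      left_inv := fun M => Subtype.ext (by
        have ht := M.2.1
        rw [Matrix.trace_fin_two] at ht
        ext i j
        fin_cases i <;> fin_cases j <;> simp
        linear_combination -ht)
      right_inv := fun t => Subtype.ext (by
        ext <;> simp) }
  rw [Nat.card_congr (e1.trans e2), card_triples a ha]
  rw [Matrix.card_GL_field]
  have hcK : Fintype.card (ZMod p) = p := ZMod.card p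
  rw [hcK, Fin.prod_univ_two]
  simp only [Fin.val_zero, Fin.val_one, pow_zero, pow_one]
  have h1 : (1:ℕ) ≤ p := by omega
  have h2 : (2:ℕ) ≤ p := by omega
  have hA : (1:ℕ) ≤ p ^ 2 := Nat.one_le_pow _ _ (by omega)
  have hB : p ≤ p ^ 2 := by nlinarith
  have hsub : p - 1 ≤ p ^ 2 := le_trans (Nat.sub_le p 1) hB
  push_cast [Nat.cast_sub h1, Nat.cast_sub h2, Nat.cast_sub hA, Nat.cast_sub hB,
    Nat.cast_sub hsub]
  have hp3Q : (3:ℚ) ≤ p := by exact_mod_cast hp3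
  have hx : (0:ℚ) < (p:ℚ)^2 - 1 := by nlinarith
  have hy : (0:ℚ) < (p:ℚ)^2 - (p:ℚ) := by nlinarith
  have hz : (0:ℚ) < ((p:ℚ) - 1)^2 := by nlinarith
  have hw : (0:ℚ) < (p:ℚ) + 1 := by nlinarith
  rw [div_eq_div_iff (ne_of_gt (mul_pos hx hy)) (ne_of_gt (mul_pos hz hw))]
  ring
end

section
/- Let p be an odd prime. The set C_{1,2} of matrices in GL_2(F_p) with determinant 1 and trace 2 has cardinality p^2. -/
open Matrix

/-- The GL₂ element corresponding to parameters `(x, b, c)` with `b*c = -x²`. -/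
def glParam {p : ℕ} (x b c : ZMod p) (h : b * c = - x ^ 2) : GL (Fin 2) (ZMod p) :=
  ⟨!![1 + x, b; c, 1 - x], !![1 - x, -b; -c, 1 + x], by
    ext i j
    fin_cases i <;> fin_cases j <;>
      simp [Matrix.mul_apply, Fin.sum_univ_two, Matrix.one_apply] <;>
      first | ring1 | linear_combination -h, by
    ext i j
    fin_cases i <;> fin_cases j <;>
      simp [Matrix.mul_apply, Fin.sum_univ_two, Matrix.one_apply] <;>
      first | ring1 | linear_combination -h⟩

/-- The set `C_{1,2}` is in bijection with the quadric cone `bc = -x²`. -/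
noncomputable def equivCone (p : ℕ) [Fact p.Prime] :
    {γ : GL (Fin 2) (ZMod p) |
      Matrix.det (γ : Matrix (Fin 2) (Fin 2) (ZMod p)) = 1 ∧
      Matrix.trace (γ : Matrix (Fin 2) (Fin 2) (ZMod p)) = 2} ≃
    {v : ZMod p × ZMod p × ZMod p // v.2.1 * v.2.2 = - v.1 ^ 2} where
  toFun s := ⟨((s.1 : Matrix (Fin 2) (Fin 2) (ZMod p)) 0 0 - 1,
      (s.1 : Matrix (Fin 2) (Fin 2) (ZMod p)) 0 1,
      (s.1 : Matrix (Fin 2) (Fin 2) (ZMod p)) 1 0), by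
    obtain ⟨hd, ht⟩ := s.2
    rw [Matrix.det_fin_two] at hd
    rw [Matrix.trace_fin_two] at ht
    dsimp only
    linear_combination -hd + ((s.1 : Matrix (Fin 2) (Fin 2) (ZMod p)) 0 0) * ht⟩
  invFun v := ⟨glParam v.1.1 v.1.2.1 v.1.2.2 v.2, by
    constructor
    · show Matrix.det !![1 + v.1.1, v.1.2.1; v.1.2.2, 1 - v.1.1] = 1
      rw [Matrix.det_fin_two_of]
      linear_combination -v.2
    · show Matrix.trace !![1 + v.1.1, v.1.2.1; v.1.2.2, 1 - v.1.1] = 2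
      rw [Matrix.trace_fin_two_of]
      ring⟩
  left_inv s := by
    obtain ⟨hd, ht⟩ := s.2
    rw [Matrix.trace_fin_two] at ht
    ext1
    apply Units.ext
    show !![_, _; _, _] = _
    ext i j
    fin_cases i <;> fin_cases j <;> simp <;>
      first
        | linear_combination ht
        | linear_combination -ht
        | linear_combination 2 * ht
        | linear_combination -2 * ht
  right_inv v := by
    ext <;> simp [glParam]

theorem card_C_one_two (p : ℕ) [Fact p.Prime] (hp : Odd p) :
    Nat.card {γ : GL (Fin 2) (ZMod p) |
      Matrix.det (γ : Matrix (Fin 2) (Fin 2) (ZMod p)) = 1 ∧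
      Matrix.trace (γ : Matrix (Fin 2) (Fin 2) (ZMod p)) = 2} = p^2 := by
  have hP := (Fact.out : p.Prime)
  -- bijection with the cone, then split on whether b is a unit
  have e2 : {v : ZMod p × ZMod p × ZMod p // v.2.1 * v.2.2 = - v.1 ^ 2} ≃
      ((ZMod p)ˣ × ZMod p) ⊕ ZMod p := by
    refine
    { toFun := fun v => if h : IsUnit v.1.2.1 then Sum.inl (h.unit, v.1.1)
        else Sum.inr v.1.2.2
      invFun := fun s => match s with
        | Sum.inl (u, x) => ⟨(x, (u : ZMod p), -x ^ 2 * ((u⁻¹ : (ZMod p)ˣ) : ZMod p)), by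
            dsimp only
            have h1 : (u : ZMod p) * ((u⁻¹ : (ZMod p)ˣ) : ZMod p) = 1 := by
              rw [← Units.val_mul, mul_inv_cancel, Units.val_one]
            linear_combination (-(x : ZMod p) ^ 2) * h1⟩
        | Sum.inr c => ⟨(0, 0, c), by simp⟩
      left_inv := ?_
      right_inv := ?_ }
    · rintro ⟨⟨x, b, c⟩, hv⟩
      dsimp only at hv ⊢
      by_cases h : IsUnit b
      · rw [dif_pos h]
        have hb : (h.unit : ZMod p) = b := h.unit_spec
        have h1 : (h.unit : ZMod p) * ((h.unit⁻¹ : (ZMod p)ˣ) : ZMod p) = 1 := by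
          rw [← Units.val_mul, mul_inv_cancel, Units.val_one]
        rw [hb] at h1
        have hc : -x ^ 2 * ((h.unit⁻¹ : (ZMod p)ˣ) : ZMod p) = c := by
          linear_combination c * h1 - ((h.unit⁻¹ : (ZMod p)ˣ) : ZMod p) * hv
        apply Subtype.ext
        simp only [Prod.mk.injEq]
        exact ⟨trivial, hb, hc⟩
      · rw [dif_neg h]
        have hb : b = 0 := by
          by_contra hb
          exact h (isUnit_iff_ne_zero.mpr hb)
        subst hb
        have hx : x = 0 := by
          have hx2 : x ^ 2 = 0 := by linear_combination hv
          exact (pow_eq_zero_iff two_ne_zero).mp hx2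
        subst hx
        rfl
    · rintro (⟨u, x⟩ | c)
      · dsimp only
        rw [dif_pos u.isUnit]
        rw [Sum.inl.injEq, Prod.mk.injEq]
        exact ⟨Units.ext u.isUnit.unit_spec, rfl⟩
      · dsimp only
        rw [dif_neg (by simp : ¬ IsUnit (0 : ZMod p))]
  rw [Nat.card_congr ((equivCone p).trans e2)]
  rw [Nat.card_sum, Nat.card_prod]
  simp only [Nat.card_eq_fintype_card]
  rw [ZMod.card,
    ZMod.card_units_eq_totient, Nat.totient_prime hP]
  obtain ⟨k, rfl⟩ : ∃ k, p = k + 1 := ⟨p - 1, by have := hP.pos; omega⟩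
  simp [Nat.succ_sub_one]
  ring
end

section
/- Let p be an odd prime. Then the sum over i = 1, ..., p-1 (i.e., over i ∈ F_p^×) of #C_{i,i+1}/#GL_2(F_p) equals (p^2 - 2)/((p-1)^2(p+1)). -/
variable (p : ℕ) [Fact p.Prime]

lemma hyper_card (k : ZMod p) :
    Nat.card {x : ZMod p × ZMod p // x.1 * x.2 = k} = (if k = 0 then p else 0) + (p - 1) := by
  rw [Nat.card_eq_fintype_card, Fintype.card_subtype, Finset.card_filter,
    Fintype.sum_prod_type]
  have step : ∀ b : ZMod p, (∑ c : ZMod p, if b * c = k then 1 else 0)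
      = if b = 0 then (if k = 0 then p else 0) else 1 := by
    intro b
    rcases eq_or_ne b 0 with rfl | hb
    · simp only [zero_mul, if_pos rfl]
      rcases eq_or_ne k 0 with rfl | hk
      · simp [ZMod.card]
      · simp [hk, Ne.symm hk]
    · have : ∀ c : ZMod p, (b * c = k) ↔ (c = b⁻¹ * k) := by
        intro c
        constructor
        · rintro rfl; field_simp
        · rintro rfl; field_simp
      simp only [this, Finset.sum_ite_eq' Finset.univ, Finset.mem_univ, if_true, hb, if_false]
  rw [Finset.sum_congr rfl (fun b _ => step b)]
  rw [Finset.sum_eq_sum_sdiff_singleton_add (Finset.mem_univ (0 : ZMod p))]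
  have h2 : ∀ b ∈ Finset.univ \ {(0 : ZMod p)},
      (if b = 0 then (if k = 0 then p else 0) else 1) = 1 := by
    intro b hb
    rw [if_neg]
    simpa using (Finset.mem_sdiff.1 hb).2
  rw [Finset.sum_congr rfl h2, Finset.sum_const, if_pos rfl, smul_eq_mul, mul_one,
    Finset.card_univ_diff, Finset.card_singleton]
  rw [ZMod.card, Nat.add_comm]
variable (p : ℕ) [Fact p.Prime]

noncomputable def matEquiv (m n : ZMod p) :
    {M : Matrix (Fin 2) (Fin 2) (ZMod p) // M.det = m ∧ M.trace = n} ≃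
      Σ a : ZMod p, {x : ZMod p × ZMod p // x.1 * x.2 = a * (n - a) - m} where
  toFun M := ⟨M.1 0 0, ⟨(M.1 0 1, M.1 1 0), by
    have h1 := M.2.1; have h2 := M.2.2
    rw [Matrix.det_fin_two] at h1; rw [Matrix.trace_fin_two] at h2
    linear_combination (M.1 0 0) * h2 - h1⟩⟩
  invFun x := ⟨!![x.1, x.2.1.1; x.2.1.2, n - x.1], by
    constructor
    · rw [Matrix.det_fin_two_of]; linear_combination -x.2.2
    · rw [Matrix.trace_fin_two_of]; ring⟩
  left_inv M := by
    apply Subtype.ext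
    have h2 := M.2.2
    rw [Matrix.trace_fin_two] at h2
    have hd : n - M.1 0 0 = M.1 1 1 := by linear_combination -h2
    simp only [hd]
    exact (Matrix.eta_fin_two M.1).symm
  right_inv x := by
    obtain ⟨a, ⟨⟨b, c⟩, h⟩⟩ := x
    rfl
variable (p : ℕ) [Fact p.Prime]

noncomputable def glEquiv (m n : ZMod p) (hm : m ≠ 0) :
    {γ : GL (Fin 2) (ZMod p) //
        Matrix.det (γ : Matrix (Fin 2) (Fin 2) (ZMod p)) = m ∧
        Matrix.trace (γ : Matrix (Fin 2) (Fin 2) (ZMod p)) = n} ≃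
      {M : Matrix (Fin 2) (Fin 2) (ZMod p) // M.det = m ∧ M.trace = n} where
  toFun γ := ⟨(γ.1 : Matrix (Fin 2) (Fin 2) (ZMod p)), γ.2⟩
  invFun M := ⟨((Matrix.isUnit_iff_isUnit_det M.1).2 (by
      rw [M.2.1]; exact isUnit_iff_ne_zero.2 hm)).unit, by
    simpa [IsUnit.unit_spec] using M.2⟩
  left_inv γ := by
    apply Subtype.ext
    exact Units.ext (IsUnit.unit_spec _)
  right_inv M := by
    apply Subtype.ext
    exact IsUnit.unit_spec ((Matrix.isUnit_iff_isUnit_det M.1).2 (by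
      rw [M.2.1]; exact isUnit_iff_ne_zero.2 hm))

lemma count_eq (i : (ZMod p)ˣ) :
    Nat.card {γ : GL (Fin 2) (ZMod p) |
        Matrix.det (γ : Matrix (Fin 2) (Fin 2) (ZMod p)) = (i : ZMod p) ∧
        Matrix.trace (γ : Matrix (Fin 2) (Fin 2) (ZMod p)) = (i : ZMod p) + 1}
      = (if (i : ZMod p) = 1 then p else 2 * p) + p * (p - 1) := by
  simp only [Set.coe_setOf]
  rw [Nat.card_congr (glEquiv p (i : ZMod p) ((i : ZMod p) + 1) i.ne_zero),
    Nat.card_congr (matEquiv p (i : ZMod p) ((i : ZMod p) + 1)), Nat.card_eq_fintype_card, Fintype.card_sigma]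
  simp only [← Nat.card_eq_fintype_card]
  have hroot : ∀ a : ZMod p,
      (a * ((i : ZMod p) + 1 - a) - (i : ZMod p) = 0) ↔ a ∈ ({1, (i : ZMod p)} : Finset (ZMod p)) := by
    intro a
    rw [Finset.mem_insert, Finset.mem_singleton]
    constructor
    · intro h
      have h2 : (a - 1) * (a - (i : ZMod p)) = 0 := by linear_combination -h
      rcases mul_eq_zero.1 h2 with h3 | h3
      · exact Or.inl (by linear_combination h3)
      · exact Or.inr (by linear_combination h3)
    · rintro (rfl | rfl) <;> ring
  calc ∑ a : ZMod p, Nat.card {x : ZMod p × ZMod p //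
          x.1 * x.2 = a * ((i : ZMod p) + 1 - a) - (i : ZMod p)}
      = ∑ a : ZMod p, ((if a ∈ ({1, (i : ZMod p)} : Finset (ZMod p)) then p else 0) + (p - 1)) := by
        refine Finset.sum_congr rfl fun a _ => ?_
        rw [hyper_card]
        simp only [hroot a]
    _ = (if (i : ZMod p) = 1 then p else 2 * p) + p * (p - 1) := by
        rw [Finset.sum_add_distrib, Finset.sum_const, Finset.card_univ, ZMod.card, smul_eq_mul]
        congr 1
        rw [Finset.sum_ite_mem, Finset.univ_inter, Finset.sum_const, smul_eq_mul]
        rw [Finset.card_insert_eq_ite, Finset.card_singleton]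
        rcases eq_or_ne ((i : ZMod p)) 1 with h | h
        · simp [h]
        · simp [h, Ne.symm h, two_mul]

theorem sum_C_i_isucc (p : ℕ) [Fact p.Prime] (hp : Odd p) :
    ∑ i : (ZMod p)ˣ,
      (Nat.card {γ : GL (Fin 2) (ZMod p) |
          Matrix.det (γ : Matrix (Fin 2) (Fin 2) (ZMod p)) = (i : ZMod p) ∧
          Matrix.trace (γ : Matrix (Fin 2) (Fin 2) (ZMod p)) = (i : ZMod p) + 1} : ℚ) /
        (Nat.card (GL (Fin 2) (ZMod p)) : ℚ) =
      ((p : ℚ)^2 - 2) / (((p : ℚ) - 1)^2 * ((p : ℚ) + 1)) := by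
  have hp' : p.Prime := Fact.out
  have hpne2 : p ≠ 2 := by rintro rfl; exact (Nat.not_odd_iff_even.mpr even_two) hp
  have hp3 : 3 ≤ p := by have := hp'.two_le; omega
  have hpQ : (3:ℚ) ≤ (p:ℚ) := by exact_mod_cast hp3
  have hcardu : Fintype.card (ZMod p)ˣ = p - 1 := by
    rw [ZMod.card_units_eq_totient, Nat.totient_prime hp']
  simp only [count_eq p]
  rw [← Finset.sum_div]
  have hG : (Nat.card (GL (Fin 2) (ZMod p)) : ℚ) = ((p:ℚ)^2 - 1) * ((p:ℚ)^2 - (p:ℚ)) := by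
    rw [Matrix.card_GL_field, Fin.prod_univ_two, ZMod.card]
    simp only [Fin.isValue, Fin.val_zero, Fin.val_one, pow_zero, pow_one]
    rw [Nat.cast_mul, Nat.cast_sub (show 1 ≤ p^2 by nlinarith),
      Nat.cast_sub (show p ≤ p^2 by nlinarith)]
    push_cast
    ring
  rw [hG]
  have hcast : ∀ i : (ZMod p)ˣ, (((if (i : ZMod p) = 1 then p else 2*p) + p*(p-1) : ℕ) : ℚ)
      = (if i = 1 then (p:ℚ) else 2*(p:ℚ)) + (p:ℚ)*((p:ℚ)-1) := by
    intro i
    rcases eq_or_ne i 1 with rfl | h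
    · rw [if_pos Units.val_one, if_pos rfl]
      push_cast [Nat.cast_sub (show 1 ≤ p by omega)]; ring
    · rw [if_neg (by simpa [Units.val_eq_one] using h), if_neg h]
      push_cast [Nat.cast_sub (show 1 ≤ p by omega)]; ring
  rw [Finset.sum_congr rfl fun i _ => hcast i]
  rw [Finset.sum_add_distrib, Finset.sum_const, Finset.card_univ, hcardu]
  rw [Finset.sum_eq_sum_sdiff_singleton_add (Finset.mem_univ (1 : (ZMod p)ˣ))]
  have h2 : ∀ i ∈ Finset.univ \ {(1 : (ZMod p)ˣ)},
      (if i = 1 then (p:ℚ) else 2*(p:ℚ)) = 2*(p:ℚ) := by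
    intro i hi
    rw [if_neg]
    simpa using (Finset.mem_sdiff.1 hi).2
  rw [Finset.sum_congr rfl h2, Finset.sum_const, Finset.card_univ_diff, Finset.card_singleton,
    hcardu, if_pos rfl]
  have hc1 : ((p - 1 - 1 : ℕ) : ℚ) = (p:ℚ) - 2 := by
    have : p - 1 - 1 = p - 2 := by omega
    rw [this, Nat.cast_sub (by omega)]; norm_num
  have hc2 : ((p - 1 : ℕ) : ℚ) = (p:ℚ) - 1 := by
    rw [Nat.cast_sub (by omega)]; norm_num
  rw [nsmul_eq_mul, nsmul_eq_mul, hc1, hc2]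
  have hd1 : ((p:ℚ)^2 - 1) * ((p:ℚ)^2 - (p:ℚ)) ≠ 0 := by
    apply ne_of_gt
    apply mul_pos <;> nlinarith
  have hd2 : ((p:ℚ) - 1)^2 * ((p:ℚ) + 1) ≠ 0 := by
    apply ne_of_gt
    apply mul_pos <;> nlinarith
  rw [div_eq_div_iff hd1 hd2]
  ring
end

section
/- Let p be an odd prime and i ∈ F_p^×. The set C_{i,-(i+1)} of matrices in GL_2(F_p) with determinant i and trace -(i+1) satisfies: the sum over i ∈ F_p^× of #C_{i,-(i+1)}/#GL_2(F_p) equals (p^2-2)/((p-1)^2(p+1)). -/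
/-!
Write a matrix of trace `t` as `!![a, b; c, t - a]`. Its determinant is `d` iff
`b * c = a * (t - a) - d`, an equation with `q - 1` solutions `(b, c)` when the right side is
nonzero and `2q - 1` when it vanishes. For `t = -(d + 1)` the right side is `-(a + 1)(a + d)`,
with roots `a = -1` and `a = -d`, so `#C_{d,-(d+1)} = q(q - 1) + q · #{-1, -d}`. Summing over
`d ∈ 𝔽_qˣ` gives `q(q² - 2)`, while `#GL₂(𝔽_q) = q(q - 1)²(q + 1)`.
-/

open Finset Matrix

variable {K : Type*} [Field K] [Fintype K]

local notation "q" => Fintype.card K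

lemma card_GL_fin_two : (Nat.card (GL (Fin 2) K) : ℚ) = (q - 1) ^ 2 * (q + 1) * q := by
  rw [card_GL_field, Fin.prod_univ_two, Fin.val_zero, Fin.val_one, pow_zero, pow_one,
    Nat.cast_mul, Nat.cast_sub (Nat.one_le_pow _ _ Fintype.card_pos),
    Nat.cast_sub (Nat.le_self_pow two_ne_zero _)]
  push_cast
  ring

variable [DecidableEq K]

lemma card_mul_left_eq (b m : K) :
    Fintype.card {c : K // b * c = m} = if b = 0 then (if m = 0 then q else 0) else 1 := by
  split_ifs with hb hm
  · simp [hb, hm]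
  · simp [hb, Ne.symm hm]
  · exact Fintype.card_eq_one_iff.2 ⟨⟨b⁻¹ * m, (eq_inv_mul_iff_mul_eq₀ hb).1 rfl⟩,
      fun c => Subtype.ext ((eq_inv_mul_iff_mul_eq₀ hb).2 c.2)⟩

lemma card_prod_mul_eq (m : K) :
    Fintype.card {x : K × K // x.1 * x.2 = m} = q - 1 + if m = 0 then q else 0 := by
  rw [Fintype.card_congr (Equiv.subtypeProdEquivSigmaSubtype fun b c => b * c = m),
    Fintype.card_sigma]
  simp only [card_mul_left_eq]
  rw [sum_ite, sum_const, sum_const, filter_eq', filter_ne']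
  simp [card_erase_of_mem, add_comm]

def detTraceEquiv (d t : K) :
    {A : Matrix (Fin 2) (Fin 2) K // A.det = d ∧ A.trace = t} ≃
      Σ a : K, {x : K × K // x.1 * x.2 = a * (t - a) - d} where
  toFun A := ⟨A.1 0 0, (A.1 0 1, A.1 1 0), by
    obtain ⟨A, hd, ht⟩ := A
    rw [det_fin_two] at hd
    rw [trace_fin_two] at ht
    linear_combination -hd + A 0 0 * ht⟩
  invFun s := ⟨!![s.1, s.2.1.1; s.2.1.2, t - s.1], by
    rw [det_fin_two_of, trace_fin_two_of]
    exact ⟨by linear_combination -s.2.2, by ring⟩⟩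
  left_inv A := by
    obtain ⟨A, -, ht⟩ := A
    rw [trace_fin_two] at ht
    ext i j
    fin_cases i <;> fin_cases j <;> simp [← ht]
  right_inv _ := rfl

lemma card_det_trace (d t : K) :
    Fintype.card {A : Matrix (Fin 2) (Fin 2) K // A.det = d ∧ A.trace = t} =
      q * (q - 1) + q * #{a | a * (t - a) = d} := by
  rw [Fintype.card_congr (detTraceEquiv d t), Fintype.card_sigma]
  simp only [card_prod_mul_eq, sub_eq_zero, sum_add_distrib, sum_ite, sum_const_zero, sum_const,
    card_univ, smul_eq_mul, add_zero]
  ring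

lemma card_roots_neg_succ (d : K) :
    #{a : K | a * (-(d + 1) - a) = d} = if d = 1 then 1 else 2 := by
  have hroots : ({a : K | a * (-(d + 1) - a) = d} : Finset K) = {-1, -d} := by
    ext a
    simp only [mem_filter, mem_univ, true_and, mem_insert, mem_singleton]
    rw [← sub_eq_zero, show a * (-(d + 1) - a) - d = -((a + 1) * (a + d)) by ring, neg_eq_zero,
      mul_eq_zero, add_eq_zero_iff_eq_neg, add_eq_zero_iff_eq_neg]
  rw [hroots]
  split_ifs with hd
  · simp [hd]
  · exact card_pair fun h => hd (neg_inj.1 h).symm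

lemma card_GL_det_trace (d t : K) (hd : d ≠ 0) :
    Nat.card {γ : GL (Fin 2) K | (γ : Matrix (Fin 2) (Fin 2) K).det = d ∧
        (γ : Matrix (Fin 2) (Fin 2) K).trace = t} =
      Fintype.card {A : Matrix (Fin 2) (Fin 2) K // A.det = d ∧ A.trace = t} := by
  rw [← Nat.card_eq_fintype_card]
  exact Nat.card_congr
    { toFun γ := ⟨γ.1, γ.2⟩
      invFun A := ⟨GeneralLinearGroup.mkOfDetNeZero A.1 (by rw [A.2.1]; exact hd), A.2⟩
      left_inv _ := Subtype.ext (Units.ext rfl)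
      right_inv _ := rfl }

theorem sum_card_GL_det_trace_neg_succ_div_card_GL :
    ∑ i : Kˣ, (Nat.card {γ : GL (Fin 2) K | (γ : Matrix (Fin 2) (Fin 2) K).det = i ∧
        (γ : Matrix (Fin 2) (Fin 2) K).trace = -((i : K) + 1)} : ℚ) / Nat.card (GL (Fin 2) K) =
      ((q : ℚ) ^ 2 - 2) / (((q : ℚ) - 1) ^ 2 * ((q : ℚ) + 1)) := by
  have hq : (1 : ℚ) < q := by exact_mod_cast Fintype.one_lt_card
  have hunits : (Fintype.card Kˣ : ℚ) = q - 1 := by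
    rw [Fintype.card_units, Nat.cast_pred Fintype.card_pos]
  have hcard (i : Kˣ) : (Nat.card {γ : GL (Fin 2) K | (γ : Matrix (Fin 2) (Fin 2) K).det = i ∧
      (γ : Matrix (Fin 2) (Fin 2) K).trace = -((i : K) + 1)} : ℚ) =
        q * (q - 1 + if (i : K) = 1 then 1 else 2) := by
    rw [card_GL_det_trace _ _ i.ne_zero, card_det_trace, card_roots_neg_succ]
    split_ifs <;> push_cast [Nat.cast_pred Fintype.card_pos] <;> ring
  have hsum : ∑ i : Kˣ, ((q : ℚ) - 1 + if (i : K) = 1 then 1 else 2) = q ^ 2 - 2 := by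
    simp only [Units.val_eq_one]
    rw [Fintype.sum_eq_add_sum_compl 1, if_pos rfl,
      sum_congr rfl fun i hi => by rw [if_neg (by simpa using hi)], sum_const, card_compl,
      card_singleton, nsmul_eq_mul, Nat.cast_pred Fintype.card_pos, hunits]
    ring
  rw [← sum_div, Fintype.sum_congr _ _ hcard, ← mul_sum, hsum, card_GL_fin_two]
  have : (q : ℚ) - 1 ≠ 0 := by linarith
  field_simp

theorem sum_C_i_neg_isucc_general (p : ℕ) [Fact p.Prime] :
    ∑ i : (ZMod p)ˣ,
      (Nat.card {γ : GL (Fin 2) (ZMod p) |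
          Matrix.det (γ : Matrix (Fin 2) (Fin 2) (ZMod p)) = (i : ZMod p) ∧
          Matrix.trace (γ : Matrix (Fin 2) (Fin 2) (ZMod p)) = -((i : ZMod p) + 1)} : ℚ) /
        (Nat.card (GL (Fin 2) (ZMod p)) : ℚ) =
      ((p : ℚ)^2 - 2) / (((p : ℚ) - 1)^2 * ((p : ℚ) + 1)) := by
  simpa only [ZMod.card] using sum_card_GL_det_trace_neg_succ_div_card_GL (K := ZMod p)

theorem sum_C_i_neg_isucc (p : ℕ) [Fact p.Prime] (hp : Odd p) :
    ∑ i : (ZMod p)ˣ,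
      (Nat.card {γ : GL (Fin 2) (ZMod p) |
          Matrix.det (γ : Matrix (Fin 2) (Fin 2) (ZMod p)) = (i : ZMod p) ∧
          Matrix.trace (γ : Matrix (Fin 2) (Fin 2) (ZMod p)) = -((i : ZMod p) + 1)} : ℚ) /
        (Nat.card (GL (Fin 2) (ZMod p)) : ℚ) =
      ((p : ℚ)^2 - 2) / (((p : ℚ) - 1)^2 * ((p : ℚ) + 1)) :=
  sum_C_i_neg_isucc_general p
end

section
/- Let p be an odd prime. The proportion of matrices γ in GL_2(F_p) whose determinant i satisfies i ∉ {1, -1} (as elements of F_p) and whose trace equals ±(det(γ)+1) in F_p equals 2(p-3)/(p-1)^2. -/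
open Finset Matrix

variable {p : ℕ} [Fact p.Prime]

lemma mul_count (k : ZMod p) :
    (Finset.univ.filter (fun x : ZMod p × ZMod p => x.1 * x.2 = k)).card =
      if k = 0 then 2 * p - 1 else p - 1 := by
  rcases eq_or_ne k 0 with rfl | hk
  · rw [if_pos rfl]
    have h1 : (Finset.univ.filter (fun x : ZMod p × ZMod p => x.1 * x.2 = 0)) =
        (Finset.univ.filter (fun x : ZMod p × ZMod p => x.1 = 0)) ∪
        (Finset.univ.filter (fun x : ZMod p × ZMod p => x.2 = 0)) := by
      ext x; simp [mul_eq_zero]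
    have h2 : (Finset.univ.filter (fun x : ZMod p × ZMod p => x.1 = 0)) ∩
        (Finset.univ.filter (fun x : ZMod p × ZMod p => x.2 = 0)) = {(0,0)} := by
      ext x; simp [Prod.ext_iff]
    have c1 : (Finset.univ.filter (fun x : ZMod p × ZMod p => x.1 = 0)).card = p := by
      have : (Finset.univ.filter (fun x : ZMod p × ZMod p => x.1 = 0)).card =
          (Finset.univ : Finset (ZMod p)).card := by
        apply Finset.card_nbij' (fun x => x.2) (fun e => (0, e)) <;> intro x hx <;> simp_all [Prod.ext_iff]
      rw [this, Finset.card_univ, ZMod.card]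
    have c2 : (Finset.univ.filter (fun x : ZMod p × ZMod p => x.2 = 0)).card = p := by
      have : (Finset.univ.filter (fun x : ZMod p × ZMod p => x.2 = 0)).card =
          (Finset.univ : Finset (ZMod p)).card := by
        apply Finset.card_nbij' (fun x => x.1) (fun e => (e, 0)) <;> intro x hx <;> simp_all [Prod.ext_iff]
      rw [this, Finset.card_univ, ZMod.card]
    have := Finset.card_union_add_card_inter
      (Finset.univ.filter (fun x : ZMod p × ZMod p => x.1 = 0))
      (Finset.univ.filter (fun x : ZMod p × ZMod p => x.2 = 0))
    rw [h2, c1, c2] at this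
    simp only [Finset.card_singleton] at this
    rw [h1]
    omega
  · rw [if_neg hk]
    have hne : (Finset.univ.filter (fun b : ZMod p => b ≠ 0)).card = p - 1 := by
      rw [Finset.filter_ne', Finset.card_erase_of_mem (Finset.mem_univ _), Finset.card_univ,
        ZMod.card]
    rw [← hne]
    apply Finset.card_nbij' (fun x => x.1) (fun b => (b, b⁻¹ * k))
    · intro x hx
      simp only [Finset.mem_coe, Finset.mem_filter, Finset.mem_univ, true_and] at hx ⊢
      intro h; rw [h, zero_mul] at hx; exact hk hx.symm
    · intro b hb
      simp only [Finset.mem_coe, Finset.mem_filter, Finset.mem_univ, true_and] at hb ⊢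
      field_simp
    · intro x hx
      simp only [Finset.mem_coe, Finset.mem_filter, Finset.mem_univ, true_and] at hx
      have hx1 : x.1 ≠ 0 := by rintro h; rw [h, zero_mul] at hx; exact hk hx.symm
      have : x.1⁻¹ * k = x.2 := by rw [← hx]; field_simp
      exact Prod.ext rfl this
    · intro b hb; rfl

lemma card3 (x y z : ZMod p) (hxy : x ≠ y) (hxz : x ≠ z) (hyz : y ≠ z) :
    (Finset.univ.filter (fun e : ZMod p => e ≠ x ∧ e ≠ y ∧ e ≠ z)).card = p - 3 := by
  have h1 : (Finset.univ.filter (fun e : ZMod p => e ≠ x ∧ e ≠ y ∧ e ≠ z)) =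
      Finset.univ \ ({x, y, z} : Finset (ZMod p)) := by
    ext e; simp [and_assoc]
  have h2 : ({x, y, z} : Finset (ZMod p)).card = 3 := by
    rw [Finset.card_insert_of_notMem (by simp [hxy, hxz]),
      Finset.card_insert_of_notMem (by simp [hyz]), Finset.card_singleton]
  rw [h1, Finset.card_sdiff_of_subset (Finset.subset_univ _), h2, Finset.card_univ, ZMod.card]

lemma zmod_two_ne_zero (hp : Odd p) : (2 : ZMod p) ≠ 0 := by
  have : ((2 : ℕ) : ZMod p) ≠ 0 := by
    rw [Ne, ZMod.natCast_eq_zero_iff]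
    intro h
    have hk := hp
    have hple := Nat.le_of_dvd (by norm_num) h
    rcases hk with ⟨k, hk⟩
    have := (Fact.out : p.Prime).two_le
    omega
  simpa using this

lemma shift_count (hp : Odd p) (a : ZMod p) :
    (Finset.univ.filter (fun e : ZMod p => a + e ≠ 0 ∧ a + e ≠ 1 ∧ a + e ≠ 2)).card = p - 3 := by
  have h2 : (2 : ZMod p) ≠ 0 := zmod_two_ne_zero hp
  have h1 : (1 : ZMod p) ≠ 0 := one_ne_zero
  have hc : Finset.univ.filter (fun e : ZMod p => a + e ≠ 0 ∧ a + e ≠ 1 ∧ a + e ≠ 2) =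
      Finset.univ.filter (fun e : ZMod p => e ≠ 0 - a ∧ e ≠ 1 - a ∧ e ≠ 2 - a) := by
    apply Finset.filter_congr
    intro e _
    have key : ∀ c : ZMod p, (a + e ≠ c) ↔ (e ≠ c - a) := by
      intro c
      constructor <;> intro h hh <;> apply h <;> linear_combination hh
    rw [key 0, key 1, key 2]
  rw [hc]
  apply card3
  · intro h; apply h1; linear_combination -h
  · intro h; apply h2; linear_combination -h
  · intro h; apply h1; linear_combination -h

lemma cond1_count (hp : Odd p) :
    (Finset.univ.filter (fun x : ZMod p × ZMod p =>
      x.1 + x.2 ≠ 0 ∧ x.1 + x.2 ≠ 1 ∧ x.1 + x.2 ≠ 2)).card = p * (p - 3) := by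
  classical
  rw [Finset.card_filter, Fintype.sum_prod_type]
  have inner : ∀ a : ZMod p,
      (∑ e : ZMod p, if a + e ≠ 0 ∧ a + e ≠ 1 ∧ a + e ≠ 2 then 1 else 0) = p - 3 := by
    intro a
    rw [← Finset.card_filter]
    exact shift_count hp a
  rw [Finset.sum_congr rfl (fun a _ => inner a), Finset.sum_const, Finset.card_univ, ZMod.card,
    smul_eq_mul]

lemma condZ_count (hp : Odd p) :
    (Finset.univ.filter (fun x : ZMod p × ZMod p =>
      (x.1 + x.2 ≠ 0 ∧ x.1 + x.2 ≠ 1 ∧ x.1 + x.2 ≠ 2) ∧ (x.1 = 1 ∨ x.2 = 1))).card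
      = 2 * (p - 3) := by
  classical
  have hsplit : (Finset.univ.filter (fun x : ZMod p × ZMod p =>
      (x.1 + x.2 ≠ 0 ∧ x.1 + x.2 ≠ 1 ∧ x.1 + x.2 ≠ 2) ∧ (x.1 = 1 ∨ x.2 = 1))) =
      (Finset.univ.filter (fun x : ZMod p × ZMod p =>
        (x.1 + x.2 ≠ 0 ∧ x.1 + x.2 ≠ 1 ∧ x.1 + x.2 ≠ 2) ∧ x.1 = 1)) ∪
      (Finset.univ.filter (fun x : ZMod p × ZMod p =>
        (x.1 + x.2 ≠ 0 ∧ x.1 + x.2 ≠ 1 ∧ x.1 + x.2 ≠ 2) ∧ x.2 = 1)) := by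
    ext x; simp; tauto
  have hdisj : Disjoint
      (Finset.univ.filter (fun x : ZMod p × ZMod p =>
        (x.1 + x.2 ≠ 0 ∧ x.1 + x.2 ≠ 1 ∧ x.1 + x.2 ≠ 2) ∧ x.1 = 1))
      (Finset.univ.filter (fun x : ZMod p × ZMod p =>
        (x.1 + x.2 ≠ 0 ∧ x.1 + x.2 ≠ 1 ∧ x.1 + x.2 ≠ 2) ∧ x.2 = 1)) := by
    rw [Finset.disjoint_left]
    intro x hx hx'
    simp only [Finset.mem_filter, Finset.mem_univ, true_and] at hx hx'
    exact hx.1.2.2 (by rw [hx.2, hx'.2]; norm_num)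
  have c1 : (Finset.univ.filter (fun x : ZMod p × ZMod p =>
      (x.1 + x.2 ≠ 0 ∧ x.1 + x.2 ≠ 1 ∧ x.1 + x.2 ≠ 2) ∧ x.1 = 1)).card = p - 3 := by
    rw [← shift_count hp 1]
    apply Finset.card_nbij' (fun x => x.2) (fun e => (1, e))
    · intro x hx
      simp only [Finset.mem_coe, Finset.mem_filter, Finset.mem_univ, true_and] at hx ⊢
      refine ⟨fun h => hx.1.1 ?_, fun h => hx.1.2.1 ?_, fun h => hx.1.2.2 ?_⟩ <;>
        rw [hx.2] <;> linear_combination h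
    · intro e he
      simp only [Finset.mem_coe, Finset.mem_filter, Finset.mem_univ, true_and] at he
      exact Finset.mem_filter.mpr ⟨Finset.mem_univ _, he, rfl⟩
    · intro x hx
      simp only [Finset.mem_coe, Finset.mem_filter, Finset.mem_univ, true_and] at hx
      exact Prod.ext hx.2.symm rfl
    · intro e he; rfl
  have c2 : (Finset.univ.filter (fun x : ZMod p × ZMod p =>
      (x.1 + x.2 ≠ 0 ∧ x.1 + x.2 ≠ 1 ∧ x.1 + x.2 ≠ 2) ∧ x.2 = 1)).card = p - 3 := by
    rw [← shift_count hp 1]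
    apply Finset.card_nbij' (fun x => x.1) (fun e => (e, 1))
    · intro x hx
      simp only [Finset.mem_coe, Finset.mem_filter, Finset.mem_univ, true_and] at hx ⊢
      refine ⟨fun h => hx.1.1 ?_, fun h => hx.1.2.1 ?_, fun h => hx.1.2.2 ?_⟩ <;>
        rw [hx.2] <;> linear_combination h
    · intro e he
      simp only [Finset.mem_coe, Finset.mem_filter, Finset.mem_univ, true_and] at he
      exact Finset.mem_filter.mpr ⟨Finset.mem_univ _,
        ⟨fun h => he.1 (by linear_combination h), fun h => he.2.1 (by linear_combination h),
        fun h => he.2.2 (by linear_combination h)⟩, rfl⟩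
    · intro x hx
      simp only [Finset.mem_coe, Finset.mem_filter, Finset.mem_univ, true_and] at hx
      exact Prod.ext rfl hx.2.symm
    · intro e he; rfl
  rw [hsplit, Finset.card_union_of_disjoint hdisj, c1, c2]
  omega

lemma caseA_count (hp : Odd p) :
    (Finset.univ.filter (fun x : (ZMod p × ZMod p) × ZMod p × ZMod p =>
      (x.1.1 + x.1.2 ≠ 0 ∧ x.1.1 + x.1.2 ≠ 1 ∧ x.1.1 + x.1.2 ≠ 2) ∧
      x.2.1 * x.2.2 = (x.1.1 - 1) * (x.1.2 - 1))).card
      = (2 * p - 1) * (2 * (p - 3)) + (p - 1) * (p * (p - 3) - 2 * (p - 3)) := by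
  classical
  rw [Finset.card_filter, Fintype.sum_prod_type]
  have inner : ∀ ae : ZMod p × ZMod p,
      (∑ bc : ZMod p × ZMod p, if (ae.1 + ae.2 ≠ 0 ∧ ae.1 + ae.2 ≠ 1 ∧ ae.1 + ae.2 ≠ 2) ∧
          bc.1 * bc.2 = (ae.1 - 1) * (ae.2 - 1) then 1 else 0)
      = if (ae.1 + ae.2 ≠ 0 ∧ ae.1 + ae.2 ≠ 1 ∧ ae.1 + ae.2 ≠ 2) then
          (if (ae.1 - 1) * (ae.2 - 1) = 0 then 2 * p - 1 else p - 1) else 0 := by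
    intro ae
    by_cases h : ae.1 + ae.2 ≠ 0 ∧ ae.1 + ae.2 ≠ 1 ∧ ae.1 + ae.2 ≠ 2
    · rw [if_pos h,
        Finset.sum_congr rfl (fun bc _ => if_congr (and_iff_right h) rfl rfl),
        ← Finset.card_filter, mul_count]
    · simp [h]
  rw [Finset.sum_congr rfl (fun ae _ => inner ae)]
  have point : ∀ ae : ZMod p × ZMod p,
      (if (ae.1 + ae.2 ≠ 0 ∧ ae.1 + ae.2 ≠ 1 ∧ ae.1 + ae.2 ≠ 2) then
          (if (ae.1 - 1) * (ae.2 - 1) = 0 then 2 * p - 1 else p - 1) else 0)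
      = (2 * p - 1) * (if (ae.1 + ae.2 ≠ 0 ∧ ae.1 + ae.2 ≠ 1 ∧ ae.1 + ae.2 ≠ 2) ∧
            (ae.1 - 1) * (ae.2 - 1) = 0 then 1 else 0)
        + (p - 1) * (if (ae.1 + ae.2 ≠ 0 ∧ ae.1 + ae.2 ≠ 1 ∧ ae.1 + ae.2 ≠ 2) ∧
            ¬ (ae.1 - 1) * (ae.2 - 1) = 0 then 1 else 0) := by
    intro ae
    by_cases h : ae.1 + ae.2 ≠ 0 ∧ ae.1 + ae.2 ≠ 1 ∧ ae.1 + ae.2 ≠ 2 <;>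
      by_cases h' : (ae.1 - 1) * (ae.2 - 1) = 0 <;> simp [h, h']
  rw [Finset.sum_congr rfl (fun ae _ => point ae), Finset.sum_add_distrib, ← Finset.mul_sum,
    ← Finset.mul_sum, ← Finset.card_filter, ← Finset.card_filter]
  have hZ : (Finset.univ.filter (fun ae : ZMod p × ZMod p =>
      (ae.1 + ae.2 ≠ 0 ∧ ae.1 + ae.2 ≠ 1 ∧ ae.1 + ae.2 ≠ 2) ∧
      (ae.1 - 1) * (ae.2 - 1) = 0)).card = 2 * (p - 3) := by
    rw [← condZ_count hp]
    apply Finset.card_equiv (Equiv.refl _)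
    intro ae
    simp only [Finset.mem_filter, Finset.mem_univ, true_and, Equiv.refl_apply, mul_eq_zero,
      sub_eq_zero]
  have hNZ : (Finset.univ.filter (fun ae : ZMod p × ZMod p =>
      (ae.1 + ae.2 ≠ 0 ∧ ae.1 + ae.2 ≠ 1 ∧ ae.1 + ae.2 ≠ 2) ∧
      ¬ (ae.1 - 1) * (ae.2 - 1) = 0)).card = p * (p - 3) - 2 * (p - 3) := by
    have hpart := Finset.card_filter_add_card_filter_not
      (s := (Finset.univ.filter (fun ae : ZMod p × ZMod p =>
        ae.1 + ae.2 ≠ 0 ∧ ae.1 + ae.2 ≠ 1 ∧ ae.1 + ae.2 ≠ 2)))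
      (p := fun ae => (ae.1 - 1) * (ae.2 - 1) = 0)
    rw [Finset.filter_filter, Finset.filter_filter, cond1_count hp] at hpart
    rw [hZ] at hpart
    omega
  rw [hZ, hNZ]

noncomputable def quadEquiv : Matrix (Fin 2) (Fin 2) (ZMod p) ≃ (ZMod p × ZMod p) × ZMod p × ZMod p where
  toFun M := ((M 0 0, M 1 1), (M 0 1, M 1 0))
  invFun x := !![x.1.1, x.2.1; x.2.2, x.1.2]
  left_inv M := by
    conv_rhs => rw [Matrix.eta_fin_two M]
  right_inv x := by
    simp

theorem prop_set_one (p : ℕ) [Fact p.Prime] (hp : Odd p) :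
    (Nat.card {γ : GL (Fin 2) (ZMod p) |
        Matrix.det (γ : Matrix (Fin 2) (Fin 2) (ZMod p)) ≠ 1 ∧
        Matrix.det (γ : Matrix (Fin 2) (Fin 2) (ZMod p)) ≠ -1 ∧
        (Matrix.trace (γ : Matrix (Fin 2) (Fin 2) (ZMod p)) =
            Matrix.det (γ : Matrix (Fin 2) (Fin 2) (ZMod p)) + 1 ∨
         Matrix.trace (γ : Matrix (Fin 2) (Fin 2) (ZMod p)) =
            -(Matrix.det (γ : Matrix (Fin 2) (Fin 2) (ZMod p)) + 1))} : ℚ) /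
      (Nat.card (GL (Fin 2) (ZMod p)) : ℚ) =
      2 * ((p : ℚ) - 3) / ((p : ℚ) - 1)^2 := by
  classical
  -- Step 0: notation
  set F := ZMod p
  -- Step 1: transfer to matrices
  have e1 : {γ : GL (Fin 2) F |
        Matrix.det (γ : Matrix (Fin 2) (Fin 2) F) ≠ 1 ∧
        Matrix.det (γ : Matrix (Fin 2) (Fin 2) F) ≠ -1 ∧
        (Matrix.trace (γ : Matrix (Fin 2) (Fin 2) F) =
            Matrix.det (γ : Matrix (Fin 2) (Fin 2) F) + 1 ∨
         Matrix.trace (γ : Matrix (Fin 2) (Fin 2) F) =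
            -(Matrix.det (γ : Matrix (Fin 2) (Fin 2) F) + 1))} ≃
      {M : Matrix (Fin 2) (Fin 2) F // M.det ≠ 0 ∧ M.det ≠ 1 ∧ M.det ≠ -1 ∧
        (M.trace = M.det + 1 ∨ M.trace = -(M.det + 1))} :=
    { toFun := fun γ => ⟨(γ.1 : Matrix (Fin 2) (Fin 2) F),
        ⟨(Matrix.isUnits_det_units γ.1).ne_zero, γ.2⟩⟩
      invFun := fun M => ⟨Matrix.GeneralLinearGroup.mkOfDetNeZero M.1 M.2.1, M.2.2⟩
      left_inv := fun γ => Subtype.ext (Units.ext rfl)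
      right_inv := fun M => Subtype.ext rfl }
  -- Step 2: transfer to quadruples
  have e2 : {M : Matrix (Fin 2) (Fin 2) F // M.det ≠ 0 ∧ M.det ≠ 1 ∧ M.det ≠ -1 ∧
        (M.trace = M.det + 1 ∨ M.trace = -(M.det + 1))} ≃
      {x : (F × F) × F × F //
        x.1.1 * x.1.2 - x.2.1 * x.2.2 ≠ 0 ∧ x.1.1 * x.1.2 - x.2.1 * x.2.2 ≠ 1 ∧
        x.1.1 * x.1.2 - x.2.1 * x.2.2 ≠ -1 ∧
        (x.1.1 + x.1.2 = (x.1.1 * x.1.2 - x.2.1 * x.2.2) + 1 ∨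
         x.1.1 + x.1.2 = -((x.1.1 * x.1.2 - x.2.1 * x.2.2) + 1))} := by
    apply Equiv.subtypeEquiv quadEquiv
    intro M
    have hdet : M.det = M 0 0 * M 1 1 - M 0 1 * M 1 0 := Matrix.det_fin_two M
    have htr : M.trace = M 0 0 + M 1 1 := Matrix.trace_fin_two M
    rw [hdet, htr]
    rfl
  have hcard : Nat.card {γ : GL (Fin 2) F |
        Matrix.det (γ : Matrix (Fin 2) (Fin 2) F) ≠ 1 ∧
        Matrix.det (γ : Matrix (Fin 2) (Fin 2) F) ≠ -1 ∧
        (Matrix.trace (γ : Matrix (Fin 2) (Fin 2) F) =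
            Matrix.det (γ : Matrix (Fin 2) (Fin 2) F) + 1 ∨
         Matrix.trace (γ : Matrix (Fin 2) (Fin 2) F) =
            -(Matrix.det (γ : Matrix (Fin 2) (Fin 2) F) + 1))} =
      (Finset.univ.filter (fun x : (F × F) × F × F =>
        x.1.1 * x.1.2 - x.2.1 * x.2.2 ≠ 0 ∧ x.1.1 * x.1.2 - x.2.1 * x.2.2 ≠ 1 ∧
        x.1.1 * x.1.2 - x.2.1 * x.2.2 ≠ -1 ∧
        (x.1.1 + x.1.2 = (x.1.1 * x.1.2 - x.2.1 * x.2.2) + 1 ∨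
         x.1.1 + x.1.2 = -((x.1.1 * x.1.2 - x.2.1 * x.2.2) + 1)))).card := by
    rw [Nat.card_congr (e1.trans e2), Nat.card_eq_fintype_card, Fintype.card_subtype]
  -- Step 3: split the disjunction
  have h2 : (2 : F) ≠ 0 := zmod_two_ne_zero hp
  have hsplit : (Finset.univ.filter (fun x : (F × F) × F × F =>
        x.1.1 * x.1.2 - x.2.1 * x.2.2 ≠ 0 ∧ x.1.1 * x.1.2 - x.2.1 * x.2.2 ≠ 1 ∧
        x.1.1 * x.1.2 - x.2.1 * x.2.2 ≠ -1 ∧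
        (x.1.1 + x.1.2 = (x.1.1 * x.1.2 - x.2.1 * x.2.2) + 1 ∨
         x.1.1 + x.1.2 = -((x.1.1 * x.1.2 - x.2.1 * x.2.2) + 1)))) =
      (Finset.univ.filter (fun x : (F × F) × F × F =>
        x.1.1 * x.1.2 - x.2.1 * x.2.2 ≠ 0 ∧ x.1.1 * x.1.2 - x.2.1 * x.2.2 ≠ 1 ∧
        x.1.1 * x.1.2 - x.2.1 * x.2.2 ≠ -1 ∧
        x.1.1 + x.1.2 = (x.1.1 * x.1.2 - x.2.1 * x.2.2) + 1)) ∪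
      (Finset.univ.filter (fun x : (F × F) × F × F =>
        x.1.1 * x.1.2 - x.2.1 * x.2.2 ≠ 0 ∧ x.1.1 * x.1.2 - x.2.1 * x.2.2 ≠ 1 ∧
        x.1.1 * x.1.2 - x.2.1 * x.2.2 ≠ -1 ∧
        x.1.1 + x.1.2 = -((x.1.1 * x.1.2 - x.2.1 * x.2.2) + 1))) := by
    ext x; simp only [Finset.mem_filter, Finset.mem_univ, true_and, Finset.mem_union]; tauto
  have hdisj : Disjoint
      (Finset.univ.filter (fun x : (F × F) × F × F =>
        x.1.1 * x.1.2 - x.2.1 * x.2.2 ≠ 0 ∧ x.1.1 * x.1.2 - x.2.1 * x.2.2 ≠ 1 ∧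
        x.1.1 * x.1.2 - x.2.1 * x.2.2 ≠ -1 ∧
        x.1.1 + x.1.2 = (x.1.1 * x.1.2 - x.2.1 * x.2.2) + 1))
      (Finset.univ.filter (fun x : (F × F) × F × F =>
        x.1.1 * x.1.2 - x.2.1 * x.2.2 ≠ 0 ∧ x.1.1 * x.1.2 - x.2.1 * x.2.2 ≠ 1 ∧
        x.1.1 * x.1.2 - x.2.1 * x.2.2 ≠ -1 ∧
        x.1.1 + x.1.2 = -((x.1.1 * x.1.2 - x.2.1 * x.2.2) + 1))) := by
    rw [Finset.disjoint_left]
    intro x hx hx'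
    simp only [Finset.mem_filter, Finset.mem_univ, true_and] at hx hx'
    apply hx.2.2.1
    have h := hx.2.2.2
    have h' := hx'.2.2.2
    have : (2 : F) * (x.1.1 * x.1.2 - x.2.1 * x.2.2 + 1) = 0 := by linear_combination h' - h
    rcases mul_eq_zero.mp this with hc | hc
    · exact absurd hc h2
    · linear_combination hc
  -- Step 4: the negation bijection
  have hneg : (Finset.univ.filter (fun x : (F × F) × F × F =>
        x.1.1 * x.1.2 - x.2.1 * x.2.2 ≠ 0 ∧ x.1.1 * x.1.2 - x.2.1 * x.2.2 ≠ 1 ∧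
        x.1.1 * x.1.2 - x.2.1 * x.2.2 ≠ -1 ∧
        x.1.1 + x.1.2 = -((x.1.1 * x.1.2 - x.2.1 * x.2.2) + 1))).card =
      (Finset.univ.filter (fun x : (F × F) × F × F =>
        x.1.1 * x.1.2 - x.2.1 * x.2.2 ≠ 0 ∧ x.1.1 * x.1.2 - x.2.1 * x.2.2 ≠ 1 ∧
        x.1.1 * x.1.2 - x.2.1 * x.2.2 ≠ -1 ∧
        x.1.1 + x.1.2 = (x.1.1 * x.1.2 - x.2.1 * x.2.2) + 1)).card := by
    apply Finset.card_nbij' (fun x => ((-x.1.1, -x.1.2), (-x.2.1, -x.2.2)))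
      (fun x => ((-x.1.1, -x.1.2), (-x.2.1, -x.2.2))) <;>
      (intro x hx
       simp only [Finset.mem_coe, Finset.mem_filter, Finset.mem_univ, true_and] at hx ⊢) <;>
      [skip; skip; exact Prod.ext (Prod.ext (neg_neg _) (neg_neg _)) (Prod.ext (neg_neg _) (neg_neg _));
       exact Prod.ext (Prod.ext (neg_neg _) (neg_neg _)) (Prod.ext (neg_neg _) (neg_neg _))] <;>
      (obtain ⟨h0, h1, hm, ht⟩ := hx
       refine ⟨fun h => h0 (by linear_combination h), fun h => h1 (by linear_combination h),
         fun h => hm (by linear_combination h), by linear_combination -ht⟩)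
  -- Step 5: identify case A with the counted set
  have hAeq : (Finset.univ.filter (fun x : (F × F) × F × F =>
        x.1.1 * x.1.2 - x.2.1 * x.2.2 ≠ 0 ∧ x.1.1 * x.1.2 - x.2.1 * x.2.2 ≠ 1 ∧
        x.1.1 * x.1.2 - x.2.1 * x.2.2 ≠ -1 ∧
        x.1.1 + x.1.2 = (x.1.1 * x.1.2 - x.2.1 * x.2.2) + 1)) =
      (Finset.univ.filter (fun x : (F × F) × F × F =>
        (x.1.1 + x.1.2 ≠ 0 ∧ x.1.1 + x.1.2 ≠ 1 ∧ x.1.1 + x.1.2 ≠ 2) ∧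
        x.2.1 * x.2.2 = (x.1.1 - 1) * (x.1.2 - 1))) := by
    apply Finset.filter_congr
    intro x _
    constructor
    · rintro ⟨h0, h1, hm, ht⟩
      refine ⟨⟨fun h => hm (by linear_combination h - ht),
        fun h => h0 (by linear_combination h - ht),
        fun h => h1 (by linear_combination h - ht)⟩, by linear_combination ht⟩
    · rintro ⟨⟨c0, c1, c2⟩, hbc⟩
      have ht : x.1.1 + x.1.2 = (x.1.1 * x.1.2 - x.2.1 * x.2.2) + 1 := by
        linear_combination hbc
      exact ⟨fun h => c1 (by linear_combination ht + h),
        fun h => c2 (by linear_combination ht + h),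
        fun h => c0 (by linear_combination ht + h), ht⟩
  -- Step 6: assemble
  have h3 : 3 ≤ p := by
    have h2' := (Fact.out : p.Prime).two_le
    have := Nat.odd_iff.mp hp
    omega
  rw [hcard, hsplit, Finset.card_union_of_disjoint hdisj, hneg, hAeq, caseA_count hp,
    Matrix.card_GL_field, Fin.prod_univ_two, ZMod.card]
  simp only [Fin.val_zero, Fin.val_one, pow_zero, pow_one]
  have cp3 : ((p - 3 : ℕ) : ℚ) = (p : ℚ) - 3 := by
    rw [Nat.cast_sub h3]; norm_num
  have cp1 : ((p - 1 : ℕ) : ℚ) = (p : ℚ) - 1 := by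
    rw [Nat.cast_sub (by omega)]; norm_num
  have c2p : ((2 * p - 1 : ℕ) : ℚ) = 2 * (p : ℚ) - 1 := by
    rw [Nat.cast_sub (by omega)]; push_cast; ring
  have cmid : ((p * (p - 3) - 2 * (p - 3) : ℕ) : ℚ)
      = (p : ℚ) * ((p : ℚ) - 3) - 2 * ((p : ℚ) - 3) := by
    rw [Nat.cast_sub (Nat.mul_le_mul_right _ (by omega))]
    push_cast [Nat.cast_sub h3]; ring
  have cd1 : ((p ^ 2 - 1 : ℕ) : ℚ) = (p : ℚ) ^ 2 - 1 := by
    rw [Nat.cast_sub (by nlinarith)]; push_cast; ring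
  have cd2 : ((p ^ 2 - p : ℕ) : ℚ) = (p : ℚ) ^ 2 - (p : ℚ) := by
    rw [Nat.cast_sub (by nlinarith)]; push_cast; ring
  push_cast [c2p, cp3, cp1, cmid, cd1, cd2]
  have hpq : (3 : ℚ) ≤ (p : ℚ) := by exact_mod_cast h3
  have hd1 : (0 : ℚ) < ((p : ℚ) ^ 2 - 1) * ((p : ℚ) ^ 2 - (p : ℚ)) := by nlinarith
  have hd2 : (0 : ℚ) < ((p : ℚ) - 1) ^ 2 := by nlinarith
  rw [div_eq_div_iff hd1.ne' hd2.ne']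
  ring
end

section
/- Let p be an odd prime and i ∈ F_p^× such that -i is a quadratic residue mod p (i.e., -i is a square in F_p^×). Then the number of matrices in GL_2(F_p) with determinant i and trace 0 equals p(p+1). -/
open Finset Matrix

private lemma count_pairs_aux (p : ℕ) [Fact p.Prime] (t : ZMod p) :
    (∑ b : ZMod p, ∑ c : ZMod p, if b * c = t then 1 else 0) =
      (p - 1) + if t = 0 then p else 0 := by
  classical
  rw [← Finset.sum_erase_add _ _ (Finset.mem_univ (0 : ZMod p))]
  have h0 : (∑ c : ZMod p, if (0 : ZMod p) * c = t then 1 else 0) =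
      if t = 0 then p else 0 := by
    by_cases ht : t = 0 <;> simp [ht, eq_comm, Finset.card_univ, ZMod.card]
  have h1 : ∀ b : ZMod p, b ≠ 0 →
      (∑ c : ZMod p, if b * c = t then 1 else 0) = 1 := by
    intro b hb
    have : ∀ c : ZMod p, (b * c = t) ↔ (c = b⁻¹ * t) := by
      intro c
      constructor
      · intro h; rw [← h]; exact (inv_mul_cancel_left₀ hb c).symm
      · rintro rfl; rw [mul_inv_cancel_left₀ hb]
    calc (∑ c : ZMod p, if b * c = t then 1 else 0)
        = ∑ c : ZMod p, if c = b⁻¹ * t then 1 else 0 :=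
          Finset.sum_congr rfl fun c _ => if_congr (this c) rfl rfl
      _ = 1 := by simp
  rw [h0]
  congr 1
  rw [Finset.sum_congr rfl fun b hb => h1 b (Finset.mem_erase.mp hb).1]
  simp [Finset.card_erase_of_mem, Finset.card_univ, ZMod.card]

theorem card_det_i_trace_zero_residue (p : ℕ) [Fact p.Prime] (hp : Odd p)
    (i : ZMod p) (hi : i ≠ 0) (hsq : IsSquare (-i)) :
    Nat.card {γ : GL (Fin 2) (ZMod p) |
      Matrix.det (γ : Matrix (Fin 2) (Fin 2) (ZMod p)) = i ∧
      Matrix.trace (γ : Matrix (Fin 2) (Fin 2) (ZMod p)) = 0} = p * (p + 1) := by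
  classical
  obtain ⟨r, hr⟩ := hsq
  have hr0 : r ≠ 0 := by
    rintro rfl
    rw [mul_zero, neg_eq_zero] at hr
    exact hi hr
  have hp2 : (p : ℕ) ≠ 2 := by
    rintro rfl
    exact (Nat.not_odd_iff_even.mpr (by decide)) hp
  have htwo : (2 : ZMod p) ≠ 0 := by
    intro h
    have h2 : ((2 : ℕ) : ZMod p) = 0 := by exact_mod_cast h
    have hdvd := (ZMod.natCast_eq_zero_iff 2 p).mp h2
    exact hp2 ((Nat.prime_dvd_prime_iff_eq (Fact.out) Nat.prime_two).mp hdvd)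
  have hrneg : r ≠ -r := by
    intro h
    apply hr0
    have : (2 : ZMod p) * r = 0 := by linear_combination h
    rcases mul_eq_zero.mp this with h' | h'
    · exact absurd h' htwo
    · exact h'
  -- Step 1: equivalence with matrices
  set P : Matrix (Fin 2) (Fin 2) (ZMod p) → Prop :=
    fun M => M.det = i ∧ M.trace = 0 with hP
  have e1 : {γ : GL (Fin 2) (ZMod p) |
      Matrix.det (γ : Matrix (Fin 2) (Fin 2) (ZMod p)) = i ∧
      Matrix.trace (γ : Matrix (Fin 2) (Fin 2) (ZMod p)) = 0} ≃
      {M : Matrix (Fin 2) (Fin 2) (ZMod p) // P M} :=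
    { toFun := fun γ => ⟨(γ : GL (Fin 2) (ZMod p)), γ.2⟩
      invFun := fun M => ⟨Matrix.GeneralLinearGroup.mkOfDetNeZero M.1
          (by rw [M.2.1]; exact hi), M.2⟩
      left_inv := fun γ => by
        apply Subtype.ext; apply Units.ext; rfl
      right_inv := fun M => by apply Subtype.ext; rfl }
  -- Step 2: equivalence with triples
  have e2 : {M : Matrix (Fin 2) (Fin 2) (ZMod p) // P M} ≃
      {v : ZMod p × ZMod p × ZMod p // v.1 ^ 2 + v.2.1 * v.2.2 = -i} :=
    { toFun := fun M => ⟨(M.1 0 0, M.1 0 1, M.1 1 0), by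
        obtain ⟨hdet, htr⟩ := M.2
        rw [Matrix.det_fin_two] at hdet
        rw [Matrix.trace_fin_two] at htr
        have hd : M.1 1 1 = -(M.1 0 0) := by linear_combination htr
        rw [hd] at hdet
        simp only
        linear_combination -hdet⟩
      invFun := fun v => ⟨!![v.1.1, v.1.2.1; v.1.2.2, -v.1.1], by
        constructor
        · rw [Matrix.det_fin_two_of]
          linear_combination -v.2
        · rw [Matrix.trace_fin_two_of]; ring⟩
      left_inv := fun M => by
        apply Subtype.ext
        obtain ⟨hdet, htr⟩ := M.2
        rw [Matrix.trace_fin_two] at htr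
        have hd : -(M.1 0 0) = M.1 1 1 := by linear_combination -htr
        simp only
        rw [hd]
        exact (Matrix.eta_fin_two M.1).symm
      right_inv := fun v => by
        apply Subtype.ext
        simp }
  rw [Nat.card_congr (e1.trans e2), Nat.card_eq_fintype_card, Fintype.card_subtype]
  -- Step 3: count
  rw [Finset.card_filter]
  rw [Fintype.sum_prod_type]
  have step : ∀ a : ZMod p,
      (∑ bc : ZMod p × ZMod p, if a ^ 2 + bc.1 * bc.2 = -i then 1 else 0) =
        (p - 1) + if a ^ 2 = -i then p else 0 := by
    intro a
    rw [Fintype.sum_prod_type]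
    have := count_pairs_aux p (-i - a ^ 2)
    calc (∑ b : ZMod p, ∑ c : ZMod p, if a ^ 2 + b * c = -i then 1 else 0)
        = ∑ b : ZMod p, ∑ c : ZMod p, if b * c = -i - a ^ 2 then 1 else 0 :=
          Finset.sum_congr rfl fun b _ => Finset.sum_congr rfl fun c _ =>
            if_congr (eq_sub_iff_add_eq').symm rfl rfl
      _ = (p - 1) + if (-i - a ^ 2 = 0) then p else 0 := this
      _ = (p - 1) + if a ^ 2 = -i then p else 0 := by
          congr 1
          apply if_congr _ rfl rfl
          rw [sub_eq_zero, eq_comm]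
  rw [Finset.sum_congr rfl fun a _ => step a]
  rw [Finset.sum_add_distrib, Finset.sum_const, ← Finset.sum_filter,
    Finset.sum_const]
  have hfil : Finset.univ.filter (fun a : ZMod p => a ^ 2 = -i) = {r, -r} := by
    ext a
    simp only [Finset.mem_filter, Finset.mem_univ, true_and, Finset.mem_insert,
      Finset.mem_singleton]
    rw [hr, sq, mul_self_eq_mul_self_iff]
  rw [hfil]
  rw [Finset.card_insert_of_notMem (by simpa using hrneg), Finset.card_singleton]
  rw [Finset.card_univ, ZMod.card]
  have hp1 : 1 ≤ p := (Fact.out : p.Prime).one_lt.le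
  obtain ⟨q, rfl⟩ : ∃ q, p = q + 1 := ⟨p - 1, by omega⟩
  simp only [Nat.add_sub_cancel, smul_eq_mul]
  ring
end

section
/- Let p be an odd prime and i ∈ F_p^× such that -i is not a square in F_p. Then the number of matrices in GL_2(F_p) with determinant i and trace 0 equals p^2 - p. -/
/-!
A trace-zero matrix `!![a, b; c, -a]` has determinant `-(a ^ 2 + b * c)`. If this equals `i` and
`-i` is not a square, then `b ≠ 0`, and `c = -(a ^ 2 + i) / b` is determined by `a` and `b`.
So these matrices are parametrised by `(a, b) ∈ K × Kˣ`, and over `𝔽_p` there are `p (p - 1)`.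
-/

namespace Matrix

variable {K : Type*} [Field K] {i : K}

lemma entry_one_one_eq_neg_of_trace_eq_zero {R : Type*} [AddCommGroup R]
    {A : Matrix (Fin 2) (Fin 2) R} (htr : A.trace = 0) : A 1 1 = -A 0 0 := by
  rw [trace_fin_two] at htr
  exact eq_neg_of_add_eq_zero_right htr

lemma entry_zero_one_ne_zero_of_det_of_trace_eq_zero {A : Matrix (Fin 2) (Fin 2) K}
    (hsq : ¬IsSquare (-i)) (hdet : A.det = i) (htr : A.trace = 0) : A 0 1 ≠ 0 := by
  intro h01
  refine hsq ⟨A 0 0, ?_⟩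
  rw [← hdet, det_fin_two, entry_one_one_eq_neg_of_trace_eq_zero htr, h01]
  ring

def detTraceZeroEquiv (hsq : ¬IsSquare (-i)) :
    {A : Matrix (Fin 2) (Fin 2) K // A.det = i ∧ A.trace = 0} ≃ K × Kˣ where
  toFun A :=
    (A.1 0 0, Units.mk0 _ (entry_zero_one_ne_zero_of_det_of_trace_eq_zero hsq A.2.1 A.2.2))
  invFun ab := ⟨!![ab.1, ab.2; -(ab.1 ^ 2 + i) / ab.2, -ab.1], by
    refine ⟨?_, by simp [trace_fin_two_of]⟩
    rw [det_fin_two_of]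
    field_simp
    ring⟩
  left_inv := by
    rintro ⟨A, hdet, htr⟩
    have h01 := entry_zero_one_ne_zero_of_det_of_trace_eq_zero hsq hdet htr
    have h11 := entry_one_one_eq_neg_of_trace_eq_zero htr
    have h10 : -(A 0 0 ^ 2 + i) / A 0 1 = A 1 0 := by
      rw [det_fin_two, h11] at hdet
      field_simp
      linear_combination hdet
    refine Subtype.ext ?_
    simp only [Units.val_mk0]
    rw [h10, ← h11]
    exact (eta_fin_two A).symm
  right_inv _ := by ext <;> simp

noncomputable def GeneralLinearGroup.subtypeEquivOfIsUnitDet {n R : Type*} [Fintype n]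
    [DecidableEq n] [CommRing R] (P : Matrix n n R → Prop) (hP : ∀ A, P A → IsUnit A.det) :
    {γ : GL n R // P γ} ≃ {A : Matrix n n R // P A} where
  toFun γ := ⟨γ.1, γ.2⟩
  invFun A := ⟨nonsingInvUnit A.1 (hP A.1 A.2), A.2⟩
  left_inv _ := Subtype.ext (Units.ext rfl)
  right_inv _ := rfl

theorem card_GL_two_det_eq_trace_eq_zero (hsq : ¬IsSquare (-i)) :
    Nat.card {γ : GL (Fin 2) K | (γ : Matrix (Fin 2) (Fin 2) K).det = i ∧
      (γ : Matrix (Fin 2) (Fin 2) K).trace = 0} = Nat.card K ^ 2 - Nat.card K := by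
  have hi : i ≠ 0 := by
    rintro rfl
    exact hsq ⟨0, by simp⟩
  rw [Set.coe_ofPred, Nat.card_congr ((GeneralLinearGroup.subtypeEquivOfIsUnitDet _
      fun A hA => (hA.1 ▸ hi).isUnit).trans (detTraceZeroEquiv hsq)),
    Nat.card_prod, Nat.card_units, Nat.mul_sub_one, sq]

end Matrix

theorem card_det_i_trace_zero_nonresidue_general (p : ℕ) [Fact p.Prime]
    (i : ZMod p) (hsq : ¬ IsSquare (-i)) :
    Nat.card {γ : GL (Fin 2) (ZMod p) |
      Matrix.det (γ : Matrix (Fin 2) (Fin 2) (ZMod p)) = i ∧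
      Matrix.trace (γ : Matrix (Fin 2) (Fin 2) (ZMod p)) = 0} = p^2 - p := by
  rw [Matrix.card_GL_two_det_eq_trace_eq_zero hsq, Nat.card_zmod]

theorem card_det_i_trace_zero_nonresidue (p : ℕ) [Fact p.Prime] (hp : Odd p)
    (i : ZMod p) (hi : i ≠ 0) (hsq : ¬ IsSquare (-i)) :
    Nat.card {γ : GL (Fin 2) (ZMod p) |
      Matrix.det (γ : Matrix (Fin 2) (Fin 2) (ZMod p)) = i ∧
      Matrix.trace (γ : Matrix (Fin 2) (Fin 2) (ZMod p)) = 0} = p^2 - p :=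
  card_det_i_trace_zero_nonresidue_general p i hsq
end
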